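/- (Convolution bound for separated surface measure caps.) Let K ≥ 1, c₀ > 0, R ≥ 1. Let ω₁, ω₂ ⊂ D(1) be squares of side at most 3R^{-1/2} such that for every (v₁,w₁) ∈ ω₁ and (v₂,w₂) ∈ ω₂ one has |v₁ − v₂| ≥ c₀K⁻¹ and |w₁ − w₂| ≥ c₀K⁻¹. Let σ₁ and σ₂ be the restrictions of the surface measure dσ of S to the pieces of S above ω₁ and ω₂, respectively. Then the convolution σ₁ ∗ σ₂ (a measure on ℝ³) is absolutely continuous with respect to Lebesgue measure, with density bounded almost everywhere by C R^{-1/2}, where C = C(K, c₀) is independent of R. -/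

import Mathlib

/-!
Both caps are push-forwards under the graph map of densities `dᵢ` on the parameter plane, so
`σ₁ ∗ σ₂` is the image of `d₁(ξ) d₂(η) dξ dη` under
`(ξ, η) ↦ (ξ₁ + η₁, ξ₂ + η₂, ξ₁ξ₂ + η₁η₂)`. For fixed `ξ₁ ≠ η₁` the map
`(ξ₂, η₂) ↦ (ξ₂ + η₂, ξ₁ξ₂ + η₁η₂)` is linear with determinant `η₁ - ξ₁`, so the convolution has
the density `x ↦ ∫ |2t - x₁|⁻¹ d₁(t, ·) d₂(x₁ - t, ·) dt`, an integral over a line. On separated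
caps `|2t - x₁| = |ξ₁ - η₁| ≥ c₀/K`, both densities are at most `2` on `D(1)`, and `t` ranges over
an interval of length at most `3R^{-1/2}`: the density is at most `12 (K/c₀) R^{-1/2}`.
-/

open MeasureTheory Real
open scoped ENNReal RealInnerProductSpace

noncomputable section

/-- Euclidean `ℝ³`. -/
abbrev E3 := EuclideanSpace ℝ (Fin 3)

/-- The closed unit disk `D(1)` in `ℝ²`, the parameter domain of the compact piece
`S = {(ξ₁,ξ₂,ξ₁ξ₂) : (ξ₁,ξ₂) ∈ D(1)}` of the hyperbolic paraboloid. -/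
def D1 : Set (ℝ × ℝ) := Metric.closedBall 0 1

/-- Surface-measure density (Jacobian) of the graph map `(ξ₁,ξ₂) ↦ (ξ₁,ξ₂,ξ₁ξ₂)`. -/
def surfJ (ξ : ℝ × ℝ) : ℝ := Real.sqrt (1 + ξ.1 ^ 2 + ξ.2 ^ 2)

/-- The surface measure `dσ` of `S`, realized on the parameter disk `D(1)`
(`L^p(S,dσ)` norms of functions on `S` are `L^p(σS)` norms in graph coordinates). -/
def σS : Measure (ℝ × ℝ) :=
  (volume.restrict D1).withDensity fun ξ => ENNReal.ofReal (surfJ ξ)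

/-- The extension (adjoint restriction) operator `Ef(x) = ∫_S e^{ix·ξ} f(ξ) dσ(ξ)`
of the hyperbolic paraboloid piece `S`, in graph coordinates. -/
def extOp (f : ℝ × ℝ → ℂ) (x : E3) : ℂ :=
  ∫ ξ, Complex.exp (Complex.I * ((x 0 * ξ.1 + x 1 * ξ.2 + x 2 * (ξ.1 * ξ.2) : ℝ) : ℂ)) * f ξ ∂σS

/-- The graph parametrization `(ξ₁,ξ₂) ↦ (ξ₁,ξ₂,ξ₁ξ₂)` of `S`, into `ℝ³`. -/
def graphMap (ξ : ℝ × ℝ) : E3 :=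
  (WithLp.equiv 2 (Fin 3 → ℝ)).symm ![ξ.1, ξ.2, ξ.1 * ξ.2]

/-- The restriction of the surface measure `dσ` of `S` to the piece of `S` above
`ω ⊆ D(1)`, as a measure on `ℝ³`. -/
def surfMeasAbove (ω : Set (ℝ × ℝ)) : Measure E3 :=
  Measure.map graphMap (σS.restrict ω)

/-- Convolution of two (finite Borel) measures on `ℝ³`. -/
def mconv (μ ν : Measure E3) : Measure E3 :=
  Measure.map (fun p : E3 × E3 => p.1 + p.2) (μ.prod ν)

theorem graphMap_apply (ξ : ℝ × ℝ) : graphMap ξ = !₂[ξ.1, ξ.2, ξ.1 * ξ.2] := rfl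

@[fun_prop]
theorem measurable_graphMap : Measurable graphMap := by
  simp only [funext graphMap_apply]; fun_prop

theorem graphMap_add_graphMap (ξ η : ℝ × ℝ) :
    graphMap ξ + graphMap η = !₂[ξ.1 + η.1, ξ.2 + η.2, ξ.1 * ξ.2 + η.1 * η.2] := by
  ext i
  fin_cases i <;> rfl

theorem lintegral_euclideanSpace_fin_three {f : E3 → ℝ≥0∞} (hf : Measurable f) :
    ∫⁻ x, f x = ∫⁻ u, ∫⁻ v, ∫⁻ w, f !₂[u, v, w] := by
  have hcoord : MeasurePreserving (fun p : ℝ × ℝ × ℝ => (!₂[p.1, p.2.1, p.2.2] : E3)) := by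
    have h₀ := (EuclideanSpace.volume_preserving_symm_measurableEquiv_toLp (Fin 3)).symm
    have h₁ := (volume_preserving_piFinSuccAbove (fun _ : Fin 3 => ℝ) 0).symm
    have h₂ := (MeasurePreserving.id (volume : Measure ℝ)).prod
      (volume_preserving_finTwoArrow ℝ).symm
    convert (h₀.comp h₁).comp h₂ using 1
    · funext p
      ext i
      fin_cases i <;> simp [MeasurableEquiv.piFinSuccAbove, Fin.insertNthEquiv,
        MeasurableEquiv.finTwoArrow, MeasurableEquiv.coe_toLp]
    · rfl
  rw [← hcoord.lintegral_comp hf, Measure.volume_eq_prod, lintegral_prod _ (by fun_prop)]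
  refine lintegral_congr fun u => ?_
  rw [Measure.volume_eq_prod, lintegral_prod _ (by fun_prop)]

theorem lintegral_lintegral_real_prod_interleave {f : ℝ × ℝ → ℝ × ℝ → ℝ≥0∞}
    (hf : Measurable (Function.uncurry f)) :
    ∫⁻ ξ, ∫⁻ η, f ξ η = ∫⁻ ξ₁, ∫⁻ η₁, ∫⁻ ξ₂, ∫⁻ η₂, f (ξ₁, ξ₂) (η₁, η₂) := by
  rw [Measure.volume_eq_prod, lintegral_prod _ (by fun_prop)]
  refine lintegral_congr fun ξ₁ => ?_
  calc _ = ∫⁻ ξ₂, ∫⁻ η₁, ∫⁻ η₂, f (ξ₁, ξ₂) (η₁, η₂) :=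
        lintegral_congr fun ξ₂ => lintegral_prod _ (by fun_prop)
    _ = _ := lintegral_lintegral_swap (by fun_prop)

theorem lintegral_comp_mul_add {a : ℝ} (ha : a ≠ 0) (b : ℝ) {f : ℝ → ℝ≥0∞}
    (hf : Measurable f) :
    ∫⁻ x, f (a * x + b) = ENNReal.ofReal |a|⁻¹ * ∫⁻ x, f x := by
  rw [← lintegral_add_right_eq_self f b, ← smul_eq_mul, ← lintegral_smul_measure, ← abs_inv,
    ← Real.map_volume_mul_left ha, lintegral_map (by fun_prop) (measurable_const_mul a)]

/-- The first coordinate `x` of the solution of `x + y = v`, `p * x + q * y = w`. -/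
def solveFst (p q v w : ℝ) : ℝ := (w - q * v) / (p - q)

theorem solveFst_add_mul_add_mul {p q : ℝ} (hpq : p ≠ q) (x y : ℝ) :
    solveFst p q (x + y) (p * x + q * y) = x := by
  have : p - q ≠ 0 := sub_ne_zero.mpr hpq
  unfold solveFst
  field_simp
  ring

theorem mul_solveFst_add_mul_sub {p q : ℝ} (hpq : p ≠ q) (v w : ℝ) :
    p * solveFst p q v w + q * (v - solveFst p q v w) = w := by
  have : p - q ≠ 0 := sub_ne_zero.mpr hpq
  unfold solveFst
  field_simp
  ring

theorem lintegral_lintegral_change_vars_add_mul_add_mul {p q : ℝ} (hpq : p ≠ q)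
    {f : ℝ → ℝ → ℝ≥0∞} (hf : Measurable (Function.uncurry f)) :
    ∫⁻ x, ∫⁻ y, f x y =
      ENNReal.ofReal |p - q|⁻¹ * ∫⁻ v, ∫⁻ w, f (solveFst p q v w) (v - solveFst p q v w) := by
  have hsub : p - q ≠ 0 := sub_ne_zero.mpr hpq
  have hsolve : ∀ v x, solveFst p q v ((p - q) * x + q * v) = x := fun v x => by
    convert solveFst_add_mul_add_mul hpq x (v - x) using 2 <;> ring
  calc ∫⁻ x, ∫⁻ y, f x y = ∫⁻ x, ∫⁻ v, f x (v - x) :=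
        lintegral_congr fun x => (lintegral_sub_right_eq_self (f x) x).symm
    _ = ∫⁻ v, ∫⁻ x, f x (v - x) := lintegral_lintegral_swap (by fun_prop)
    _ = ∫⁻ v, ENNReal.ofReal |p - q|⁻¹ *
          ∫⁻ w, f (solveFst p q v w) (v - solveFst p q v w) := by
        refine lintegral_congr fun v => ?_
        rw [← lintegral_comp_mul_add hsub (q * v) (by unfold solveFst; fun_prop)]
        simp only [hsolve]
    _ = _ := lintegral_const_mul _ (by unfold solveFst; fun_prop)

theorem lintegral_mconv_map_withDensity {α : Type*} [MeasurableSpace α] {μ : Measure α}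
    [SFinite μ] {g : α → E3} (hg : Measurable g) {d₁ d₂ : α → ℝ≥0∞} (hd₁ : Measurable d₁)
    (hd₂ : Measurable d₂) {φ : E3 → ℝ≥0∞} (hφ : Measurable φ) :
    ∫⁻ z, φ z ∂mconv ((μ.withDensity d₁).map g) ((μ.withDensity d₂).map g) =
      ∫⁻ ξ, ∫⁻ η, d₁ ξ * d₂ η * φ (g ξ + g η) ∂μ ∂μ := by
  rw [show mconv _ _ = _ ∗ _ from rfl, Measure.lintegral_conv hφ,
    lintegral_map (by fun_prop) hg, lintegral_withDensity_eq_lintegral_mul _ hd₁ (by fun_prop)]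
  refine lintegral_congr fun ξ => ?_
  rw [Pi.mul_apply, lintegral_map (by fun_prop) hg,
    lintegral_withDensity_eq_lintegral_mul _ hd₂ (by fun_prop),
    ← lintegral_const_mul _ (by fun_prop)]
  simp only [Pi.mul_apply, mul_assoc]

theorem lintegral_lintegral_graphMap_add_graphMap {p q : ℝ} (hpq : p ≠ q) {d₁ d₂ : ℝ × ℝ → ℝ≥0∞}
    (hd₁ : Measurable d₁) (hd₂ : Measurable d₂) {φ : E3 → ℝ≥0∞} (hφ : Measurable φ) :
    ∫⁻ ξ₂, ∫⁻ η₂, d₁ (p, ξ₂) * d₂ (q, η₂) * φ (graphMap (p, ξ₂) + graphMap (q, η₂)) =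
      ∫⁻ v, ∫⁻ w, ENNReal.ofReal |p - q|⁻¹ * d₁ (p, solveFst p q v w) *
        d₂ (q, v - solveFst p q v w) * φ !₂[p + q, v, w] := by
  simp only [graphMap_add_graphMap]
  rw [lintegral_lintegral_change_vars_add_mul_add_mul hpq (by fun_prop),
    ← lintegral_const_mul _ (by unfold solveFst; fun_prop)]
  refine lintegral_congr fun v => ?_
  rw [← lintegral_const_mul _ (by unfold solveFst; fun_prop)]
  simp only [add_sub_cancel, mul_solveFst_add_mul_sub hpq, mul_assoc]

/-- Over `x = (u, v, w)`, the parameters with `graphMap ξ + graphMap η = x` are `ξ = (t, s)`,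
`η = (u - t, v - s)` with `s` determined by `w`; `|t - (u - t)|⁻¹` is the inverse Jacobian of
`(ξ₂, η₂) ↦ (v, w)`. -/
def graphConvKernel (d₁ d₂ : ℝ × ℝ → ℝ≥0∞) (t : ℝ) (x : E3) : ℝ≥0∞ :=
  ENNReal.ofReal |t - (x 0 - t)|⁻¹ * d₁ (t, solveFst t (x 0 - t) (x 1) (x 2)) *
    d₂ (x 0 - t, x 1 - solveFst t (x 0 - t) (x 1) (x 2))

def graphConvDensity (d₁ d₂ : ℝ × ℝ → ℝ≥0∞) (x : E3) : ℝ≥0∞ :=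
  ∫⁻ t, graphConvKernel d₁ d₂ t x

section GraphConvolution

variable {d₁ d₂ : ℝ × ℝ → ℝ≥0∞}

theorem measurable_graphConvKernel (hd₁ : Measurable d₁) (hd₂ : Measurable d₂) :
    Measurable (Function.uncurry (graphConvKernel d₁ d₂)) := by
  unfold graphConvKernel solveFst
  fun_prop

theorem measurable_graphConvDensity (hd₁ : Measurable d₁) (hd₂ : Measurable d₂) :
    Measurable (graphConvDensity d₁ d₂) :=
  (measurable_graphConvKernel hd₁ hd₂).lintegral_prod_left'

theorem mconv_map_graphMap_withDensity (hd₁ : Measurable d₁) (hd₂ : Measurable d₂) :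
    mconv ((volume.withDensity d₁).map graphMap) ((volume.withDensity d₂).map graphMap) =
      volume.withDensity (graphConvDensity d₁ d₂) := by
  refine Measure.ext_of_lintegral _ fun φ hφ => ?_
  have hk := measurable_graphConvKernel hd₁ hd₂
  rw [lintegral_mconv_map_withDensity measurable_graphMap hd₁ hd₂ hφ,
    lintegral_withDensity_eq_lintegral_mul _ (measurable_graphConvDensity hd₁ hd₂) hφ]
  calc ∫⁻ ξ, ∫⁻ η, d₁ ξ * d₂ η * φ (graphMap ξ + graphMap η)
      = ∫⁻ ξ₁, ∫⁻ η₁, ∫⁻ ξ₂, ∫⁻ η₂,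
          d₁ (ξ₁, ξ₂) * d₂ (η₁, η₂) * φ (graphMap (ξ₁, ξ₂) + graphMap (η₁, η₂)) :=
        lintegral_lintegral_real_prod_interleave (by fun_prop)
    _ = ∫⁻ t, ∫⁻ u, ∫⁻ v, ∫⁻ w, graphConvKernel d₁ d₂ t !₂[u, v, w] * φ !₂[u, v, w] := by
        refine lintegral_congr fun t => ?_
        rw [← lintegral_sub_right_eq_self _ t]
        refine lintegral_congr_ae ?_
        filter_upwards [Measure.ae_ne volume (2 * t)] with u hu
        have htu : t ≠ u - t := by contrapose! hu; linarith
        rw [lintegral_lintegral_graphMap_add_graphMap htu hd₁ hd₂ hφ, add_sub_cancel]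
        rfl
    _ = ∫⁻ t, ∫⁻ x, graphConvKernel d₁ d₂ t x * φ x :=
        lintegral_congr fun t =>
          (lintegral_euclideanSpace_fin_three ((hk.comp measurable_prodMk_left).mul hφ)).symm
    _ = ∫⁻ x, graphConvDensity d₁ d₂ x * φ x := by
        rw [lintegral_lintegral_swap (by fun_prop)]
        exact lintegral_congr fun x => lintegral_mul_const _ (by fun_prop)

end GraphConvolution

theorem graphConvDensity_le {d₁ d₂ : ℝ × ℝ → ℝ≥0∞} {I : Set ℝ} (hI : MeasurableSet I)
    {M₁ M₂ : ℝ≥0∞} {δ : ℝ} (hδ : 0 < δ) (hd₁ : ∀ ξ, d₁ ξ ≤ M₁) (hd₂ : ∀ η, d₂ η ≤ M₂)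
    (hsupp : ∀ ξ, d₁ ξ ≠ 0 → ξ.1 ∈ I) (hsep : ∀ ξ η, d₁ ξ ≠ 0 → d₂ η ≠ 0 → δ ≤ |ξ.1 - η.1|)
    (x : E3) :
    graphConvDensity d₁ d₂ x ≤ ENNReal.ofReal δ⁻¹ * M₁ * M₂ * volume I := by
  have hkernel : ∀ t, graphConvKernel d₁ d₂ t x ≤
      I.indicator (fun _ => ENNReal.ofReal δ⁻¹ * M₁ * M₂) t := by
    intro t
    set s := solveFst t (x 0 - t) (x 1) (x 2)
    by_cases hzero : d₁ (t, s) = 0 ∨ d₂ (x 0 - t, x 1 - s) = 0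
    · rcases hzero with h | h <;> simp [graphConvKernel, s, h]
    rw [not_or] at hzero
    rw [Set.indicator_of_mem (hsupp _ hzero.1)]
    have hjac : ENNReal.ofReal |t - (x 0 - t)|⁻¹ ≤ ENNReal.ofReal δ⁻¹ :=
      ENNReal.ofReal_le_ofReal (inv_anti₀ hδ (hsep _ _ hzero.1 hzero.2))
    exact mul_le_mul' (mul_le_mul' hjac (hd₁ _)) (hd₂ _)
  calc graphConvDensity d₁ d₂ x
      ≤ ∫⁻ t, I.indicator (fun _ => ENNReal.ofReal δ⁻¹ * M₁ * M₂) t := lintegral_mono hkernel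
    _ = ENNReal.ofReal δ⁻¹ * M₁ * M₂ * volume I := lintegral_indicator_const hI _

theorem surfJ_le_two {ξ : ℝ × ℝ} (hξ : ξ ∈ D1) : surfJ ξ ≤ 2 := by
  rw [D1, mem_closedBall_zero_iff, Prod.norm_def, max_le_iff, Real.norm_eq_abs,
    Real.norm_eq_abs] at hξ
  have h₁ := sq_le_one_iff_abs_le_one ξ.1 |>.mpr hξ.1
  have h₂ := sq_le_one_iff_abs_le_one ξ.2 |>.mpr hξ.2
  rw [surfJ, Real.sqrt_le_left (by norm_num)]
  linarith

theorem measurableSet_D1 : MeasurableSet D1 := measurableSet_closedBall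

def capDensity (ω : Set (ℝ × ℝ)) : ℝ × ℝ → ℝ≥0∞ :=
  (ω ∩ D1).indicator fun ξ => ENNReal.ofReal (surfJ ξ)

section CapDensity

variable {ω : Set (ℝ × ℝ)}

theorem measurable_capDensity (hω : MeasurableSet ω) : Measurable (capDensity ω) :=
  (ENNReal.measurable_ofReal.comp (by unfold surfJ; fun_prop)).indicator
    (hω.inter measurableSet_D1)

theorem surfMeasAbove_eq_map_withDensity (hω : MeasurableSet ω) :
    surfMeasAbove ω = (volume.withDensity (capDensity ω)).map graphMap := by
  rw [surfMeasAbove, σS, restrict_withDensity hω, Measure.restrict_restrict hω, capDensity,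
    withDensity_indicator (hω.inter measurableSet_D1)]

theorem capDensity_le_two (ξ : ℝ × ℝ) : capDensity ω ξ ≤ ENNReal.ofReal 2 := by
  by_cases hξ : ξ ∈ ω ∩ D1
  · rw [capDensity, Set.indicator_of_mem hξ]
    exact ENNReal.ofReal_le_ofReal (surfJ_le_two hξ.2)
  · rw [capDensity, Set.indicator_of_notMem hξ]
    exact zero_le

theorem mem_of_capDensity_ne_zero {ξ : ℝ × ℝ} (h : capDensity ω ξ ≠ 0) : ξ ∈ ω :=
  (Set.mem_of_indicator_ne_zero h).1

theorem mconv_surfMeasAbove {ω₁ ω₂ : Set (ℝ × ℝ)} (hω₁ : MeasurableSet ω₁)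
    (hω₂ : MeasurableSet ω₂) :
    mconv (surfMeasAbove ω₁) (surfMeasAbove ω₂) =
      volume.withDensity (graphConvDensity (capDensity ω₁) (capDensity ω₂)) := by
  rw [surfMeasAbove_eq_map_withDensity hω₁, surfMeasAbove_eq_map_withDensity hω₂,
    mconv_map_graphMap_withDensity (measurable_capDensity hω₁) (measurable_capDensity hω₂)]

theorem graphConvDensity_capDensity_le {ω₁ ω₂ : Set (ℝ × ℝ)} {I : Set ℝ} (hI : MeasurableSet I)
    {δ : ℝ} (hδ : 0 < δ) (hω₁I : ∀ ξ ∈ ω₁, ξ.1 ∈ I)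
    (hsep : ∀ ξ ∈ ω₁, ∀ η ∈ ω₂, δ ≤ |ξ.1 - η.1|) (x : E3) :
    graphConvDensity (capDensity ω₁) (capDensity ω₂) x ≤ ENNReal.ofReal (4 / δ) * volume I := by
  calc _ ≤ ENNReal.ofReal δ⁻¹ * ENNReal.ofReal 2 * ENNReal.ofReal 2 * volume I :=
        graphConvDensity_le hI hδ capDensity_le_two capDensity_le_two
          (fun _ hξ => hω₁I _ (mem_of_capDensity_ne_zero hξ))
          (fun _ _ hξ hη => hsep _ (mem_of_capDensity_ne_zero hξ) _ (mem_of_capDensity_ne_zero hη))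
          x
    _ = ENNReal.ofReal (4 / δ) * volume I := by
        rw [← ENNReal.ofReal_mul (by positivity), ← ENNReal.ofReal_mul (by positivity)]
        congr 2
        ring

end CapDensity

theorem convolution_separated_caps :
    ∀ (K : ℕ) (c₀ : ℝ), 1 ≤ K → 0 < c₀ →
      ∃ C : ℝ, 0 < C ∧
        ∀ R : ℝ, 1 ≤ R →
        ∀ a₁ b₁ a₂ b₂ s₁ s₂ : ℝ,
          0 ≤ s₁ → s₁ ≤ 3 * R ^ (-(1 : ℝ) / 2) → 0 ≤ s₂ → s₂ ≤ 3 * R ^ (-(1 : ℝ) / 2) →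
          (Set.Icc a₁ (a₁ + s₁) ×ˢ Set.Icc b₁ (b₁ + s₁)) ⊆ D1 →
          (Set.Icc a₂ (a₂ + s₂) ×ˢ Set.Icc b₂ (b₂ + s₂)) ⊆ D1 →
          (∀ p ∈ Set.Icc a₁ (a₁ + s₁) ×ˢ Set.Icc b₁ (b₁ + s₁),
           ∀ q ∈ Set.Icc a₂ (a₂ + s₂) ×ˢ Set.Icc b₂ (b₂ + s₂),
            c₀ / K ≤ |p.1 - q.1| ∧ c₀ / K ≤ |p.2 - q.2|) →
          ∃ g : E3 → ℝ≥0∞, Measurable g ∧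
            mconv (surfMeasAbove (Set.Icc a₁ (a₁ + s₁) ×ˢ Set.Icc b₁ (b₁ + s₁)))
                (surfMeasAbove (Set.Icc a₂ (a₂ + s₂) ×ˢ Set.Icc b₂ (b₂ + s₂)))
              = volume.withDensity g ∧
            ∀ᵐ x : E3, g x ≤ ENNReal.ofReal (C * R ^ (-(1 : ℝ) / 2)) := by
  intro K c₀ hK hc₀
  have hδ : 0 < c₀ / K := div_pos hc₀ (by exact_mod_cast hK)
  refine ⟨12 * K / c₀, by positivity, fun R _ a₁ b₁ a₂ b₂ s₁ s₂ _ hs₁R _ _ _ _ hsep => ?_⟩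
  have hω₁ : MeasurableSet (Set.Icc a₁ (a₁ + s₁) ×ˢ Set.Icc b₁ (b₁ + s₁)) :=
    measurableSet_Icc.prod measurableSet_Icc
  have hω₂ : MeasurableSet (Set.Icc a₂ (a₂ + s₂) ×ˢ Set.Icc b₂ (b₂ + s₂)) :=
    measurableSet_Icc.prod measurableSet_Icc
  refine ⟨_, measurable_graphConvDensity (measurable_capDensity hω₁) (measurable_capDensity hω₂),
    mconv_surfMeasAbove hω₁ hω₂, ae_of_all _ fun x => ?_⟩
  calc _ ≤ ENNReal.ofReal (4 / (c₀ / K)) * volume (Set.Icc a₁ (a₁ + s₁)) :=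
        graphConvDensity_capDensity_le measurableSet_Icc hδ (fun _ hξ => hξ.1)
          (fun ξ hξ η hη => (hsep ξ hξ η hη).1) x
    _ = ENNReal.ofReal (4 * K / c₀ * s₁) := by
        rw [Real.volume_Icc, add_sub_cancel_left, ← ENNReal.ofReal_mul (by positivity)]
        congr 2
        field_simp
    _ ≤ ENNReal.ofReal (12 * K / c₀ * R ^ (-(1 : ℝ) / 2)) := by
        refine ENNReal.ofReal_le_ofReal ?_
        calc 4 * K / c₀ * s₁ ≤ 4 * K / c₀ * (3 * R ^ (-(1 : ℝ) / 2)) := by gcongr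
          _ = 12 * K / c₀ * R ^ (-(1 : ℝ) / 2) := by ring
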